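/- arXiv:1411.4173 — 2 statements merged into one kernel-verified Lean document; each statement's English description precedes it below -/
import Mathlib

section
/- Consider any n ∈ ℕ ∪ {0}, any situation x_{1:n}, and any (n+1)-measurable extended real variable f (writing f(x_{1:n+1}) for its constant value on ⟦x_{1:n+1}⟧). Then E(f | x_{1:n}) = sup{Q(h | x_{1:n}) : h : 𝒳_{n+1} → ℝ with h(x) ≤ f(x_{1:n} x) for all x ∈ 𝒳_{n+1}}, and Ē(f | x_{1:n}) = inf{Q̄(h | x_{1:n}) : h : 𝒳_{n+1} → ℝ with h(x) ≥ f(x_{1:n} x) for all x ∈ 𝒳_{n+1}}, where Q̄(·|x_{1:n}) is the conjugate upper expectation of the local model Q(·|x_{1:n}). -/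
open Filter Topology

namespace IP

/-- A situation of length `n`: a tuple of the first `n` states. -/
abbrev Sit (𝒳 : ℕ → Type) (n : ℕ) := (i : Fin n) → 𝒳 i

/-- A path: an infinite sequence of states. -/
abbrev Path (𝒳 : ℕ → Type) := (i : ℕ) → 𝒳 i

/-- The initial segment `ω^n` of a path. -/
def res {𝒳 : ℕ → Type} (ω : Path 𝒳) (n : ℕ) : Sit 𝒳 n := fun i => ω i

/-- The initial (empty) situation `□`. -/
def emptySit {𝒳 : ℕ → Type} : Sit 𝒳 0 := fun i => i.elim0

/-- Append a next state to a situation. -/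
def snoc {𝒳 : ℕ → Type} {n : ℕ} (s : Sit 𝒳 n) (x : 𝒳 n) : Sit 𝒳 (n + 1) := fun i =>
  if h : (i : ℕ) < n then s ⟨i, h⟩
  else cast (congrArg 𝒳 (Nat.le_antisymm (Nat.le_of_not_lt h) (Nat.lt_succ_iff.mp i.isLt))) x

/-- Truncate a situation of length `n` to its first `k` states. -/
def trunc {𝒳 : ℕ → Type} {n : ℕ} (s : Sit 𝒳 n) (k : ℕ) (h : k ≤ n) : Sit 𝒳 k :=
  fun i => s ⟨i, lt_of_lt_of_le i.isLt h⟩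

/-- A (coherent) lower expectation on a nonempty finite set. -/
def IsLE {Y : Type} [Fintype Y] [Nonempty Y] (E : (Y → ℝ) → ℝ) : Prop :=
  (∀ f : Y → ℝ, (⨅ y, f y) ≤ E f) ∧
  (∀ f g : Y → ℝ, E f + E g ≤ E (fun y => f y + g y)) ∧
  (∀ (f : Y → ℝ) (c : ℝ), 0 ≤ c → E (fun y => c * f y) = c * E f)

/-- Submartingale w.r.t. the local models `Q` of an imprecise probability tree. -/
def IsSubmartingale {𝒳 : ℕ → Type} (Q : ∀ n, Sit 𝒳 n → (𝒳 n → ℝ) → ℝ)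
    (F : ∀ n, Sit 𝒳 n → ℝ) : Prop :=
  ∀ (n : ℕ) (s : Sit 𝒳 n), 0 ≤ Q n s (fun x => F (n + 1) (snoc s x) - F n s)

/-- Supermartingale: `-F` is a submartingale. -/
def IsSupermartingale {𝒳 : ℕ → Type} (Q : ∀ n, Sit 𝒳 n → (𝒳 n → ℝ) → ℝ)
    (F : ∀ n, Sit 𝒳 n → ℝ) : Prop :=
  IsSubmartingale Q (fun n s => -F n s)

/-- A test supermartingale: nonnegative, starting at 1. -/
def IsTestSupermartingale {𝒳 : ℕ → Type} (Q : ∀ n, Sit 𝒳 n → (𝒳 n → ℝ) → ℝ)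
    (F : ∀ n, Sit 𝒳 n → ℝ) : Prop :=
  IsSupermartingale Q F ∧ (∀ n s, 0 ≤ F n s) ∧ F 0 emptySit = 1

/-- An event is strictly null if some test supermartingale converges to `+∞` on it. -/
def StrictlyNull {𝒳 : ℕ → Type} (Q : ∀ n, Sit 𝒳 n → (𝒳 n → ℝ) → ℝ)
    (A : Set (Path 𝒳)) : Prop :=
  ∃ F : ∀ n, Sit 𝒳 n → ℝ, IsTestSupermartingale Q F ∧
    ∀ ω ∈ A, Tendsto (fun n => F n (res ω n)) atTop atTop

/-- `limsup_n F(ω^n)` as an extended real. -/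
noncomputable def pathLimsup {𝒳 : ℕ → Type} (F : ∀ n, Sit 𝒳 n → ℝ) (ω : Path 𝒳) : EReal :=
  Filter.limsup (fun n => (F n (res ω n) : EReal)) atTop

/-- `liminf_n F(ω^n)` as an extended real. -/
noncomputable def pathLiminf {𝒳 : ℕ → Type} (F : ∀ n, Sit 𝒳 n → ℝ) (ω : Path 𝒳) : EReal :=
  Filter.liminf (fun n => (F n (res ω n) : EReal)) atTop

/-- A real process bounded above. -/
def BddAbv {𝒳 : ℕ → Type} (F : ∀ n, Sit 𝒳 n → ℝ) : Prop := ∃ B : ℝ, ∀ n s, F n s ≤ B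

/-- A real process bounded below. -/
def BddBlw {𝒳 : ℕ → Type} (F : ∀ n, Sit 𝒳 n → ℝ) : Prop := ∃ B : ℝ, ∀ n s, B ≤ F n s

/-- Conditional global lower expectation `E(f|s)` of an extended real variable. -/
noncomputable def lexp {𝒳 : ℕ → Type} (Q : ∀ n, Sit 𝒳 n → (𝒳 n → ℝ) → ℝ) {n : ℕ}
    (s : Sit 𝒳 n) (f : Path 𝒳 → EReal) : EReal :=
  sSup ((fun F : ∀ k, Sit 𝒳 k → ℝ => (F n s : EReal)) ''
    {F : ∀ k, Sit 𝒳 k → ℝ | IsSubmartingale Q F ∧ BddAbv F ∧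
      ∀ ω : Path 𝒳, res ω n = s → pathLimsup F ω ≤ f ω})

/-- Conditional global upper expectation `Ē(f|s)`. -/
noncomputable def uexp {𝒳 : ℕ → Type} (Q : ∀ n, Sit 𝒳 n → (𝒳 n → ℝ) → ℝ) {n : ℕ}
    (s : Sit 𝒳 n) (f : Path 𝒳 → EReal) : EReal :=
  - lexp Q s (fun ω => - f ω)

/-- The local models of a (time-homogeneous) imprecise Markov chain with initial model `E1`
and transition models `QT`. -/
def markovQ {X : Type} (E1 : (X → ℝ) → ℝ) (QT : X → (X → ℝ) → ℝ) :
    ∀ n, Sit (fun _ => X) n → (X → ℝ) → ℝ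
  | 0, _ => E1
  | n + 1, s => QT (s ⟨n, Nat.lt_succ_self n⟩)

/-- Prefix a path with a situation (fixed state space). -/
def prependX {X : Type} {n : ℕ} (s : Sit (fun _ => X) n) (ω : ℕ → X) : ℕ → X :=
  fun i => if h : i < n then s ⟨i, h⟩ else ω (i - n)

/-- Extension of a lower transition operator to extended real maps. -/
noncomputable def Text {X : Type} (T : (X → ℝ) → X → ℝ) (g : X → EReal) : X → EReal :=
  fun x => sSup ((fun h : X → ℝ => (T h x : EReal)) '' {h : X → ℝ | ∀ y, (h y : EReal) ≤ g y})

/-- The variation (semi)norm `max h - min h`. -/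
noncomputable def varnorm {X : Type} [Fintype X] [Nonempty X] (h : X → ℝ) : ℝ :=
  (⨆ x, h x) - ⨅ x, h x

/-- The (weak) coefficient of ergodicity of a lower transition operator. -/
noncomputable def coeff {X : Type} [Fintype X] [Nonempty X] (S : (X → ℝ) → X → ℝ) : ℝ :=
  sSup {v : ℝ | ∃ h : X → ℝ, (∀ x, 0 ≤ h x ∧ h x ≤ 1) ∧ v = varnorm (S h)}

/-- Extend a situation to a path, arbitrarily. -/
noncomputable def extend {𝒳 : ℕ → Type} [∀ k, Nonempty (𝒳 k)] {n : ℕ} (t : Sit 𝒳 n) :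
    Path 𝒳 :=
  fun i => if h : i < n then t ⟨i, h⟩ else Classical.arbitrary (𝒳 i)


section Aux

variable {𝒳 : ℕ → Type}

lemma IsLE.zero' {Y : Type} [Fintype Y] [Nonempty Y] {E : (Y → ℝ) → ℝ} (hE : IsLE E) :
    E (fun _ => 0) = 0 := by
  have := hE.2.2 (fun _ => (0 : ℝ)) 0 le_rfl
  simpa using this

lemma IsLE.const_le' {Y : Type} [Fintype Y] [Nonempty Y] {E : (Y → ℝ) → ℝ} (hE : IsLE E)
    (c : ℝ) : c ≤ E (fun _ => c) := by
  have := hE.1 (fun _ => c)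
  simpa using this

lemma IsLE.exists_le' {Y : Type} [Fintype Y] [Nonempty Y] {E : (Y → ℝ) → ℝ} (hE : IsLE E)
    (g : Y → ℝ) : ∃ y, E g ≤ g y := by
  obtain ⟨y0, hy0⟩ := Finite.exists_max g
  refine ⟨y0, ?_⟩
  have h1 := hE.2.1 g (fun y => -g y)
  have h2 : E (fun y => g y + -g y) = 0 := by
    have : (fun y : Y => g y + -g y) = fun _ => (0 : ℝ) := by funext y; ring
    rw [this, hE.zero']
  have h3 : (-g y0 : ℝ) ≤ E (fun y => -g y) := by
    refine le_trans ?_ (hE.1 _)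
    exact le_ciInf fun y => by have := hy0 y; linarith
  linarith [h1, h3]

lemma IsLE.exists_nonneg' {Y : Type} [Fintype Y] [Nonempty Y] {E : (Y → ℝ) → ℝ} (hE : IsLE E)
    (g : Y → ℝ) (hg : 0 ≤ E g) : ∃ y, 0 ≤ g y := by
  obtain ⟨y, hy⟩ := hE.exists_le' g
  exact ⟨y, le_trans hg hy⟩

lemma snoc_lt {n : ℕ} (s : Sit 𝒳 n) (x : 𝒳 n) (i : Fin (n + 1)) (h : (i : ℕ) < n) :
    snoc s x i = s ⟨i, h⟩ := dif_pos h

lemma snoc_last {n : ℕ} (s : Sit 𝒳 n) (x : 𝒳 n) (h : n < n + 1) :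
    snoc s x ⟨n, h⟩ = x := by
  show (if h' : ((⟨n, h⟩ : Fin (n+1)) : ℕ) < n then _ else _) = x
  rw [dif_neg (lt_irrefl n)]
  exact cast_eq _ x

lemma trunc_snoc {m : ℕ} (t : Sit 𝒳 m) (x : 𝒳 m) (k : ℕ) (h : k ≤ m + 1) (hk : k ≤ m) :
    trunc (snoc t x) k h = trunc t k hk := by
  funext i
  exact snoc_lt t x _ (lt_of_lt_of_le i.isLt hk)

lemma trunc_self {m : ℕ} (t : Sit 𝒳 m) (h : m ≤ m) : trunc t m h = t := rfl

lemma res_extend [∀ k, Nonempty (𝒳 k)] {m : ℕ} (t : Sit 𝒳 m) : res (extend t) m = t := by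
  funext i
  show (if h : (i : ℕ) < m then t ⟨i, h⟩ else _) = t i
  rw [dif_pos i.isLt]

section Chain

variable [∀ n, Fintype (𝒳 n)] [∀ n, Nonempty (𝒳 n)]
variable {Q : ∀ n, Sit 𝒳 n → (𝒳 n → ℝ) → ℝ} {F : ∀ n, Sit 𝒳 n → ℝ}

lemma exists_step (hQ : ∀ n s, IsLE (Q n s)) (hF : IsSubmartingale Q F) {m : ℕ}
    (t : Sit 𝒳 m) : ∃ x, F m t ≤ F (m + 1) (snoc t x) := by
  obtain ⟨x, hx⟩ := (hQ m t).exists_nonneg' _ (hF m t)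
  exact ⟨x, by linarith⟩

/-- A path along which the submartingale `F` is nondecreasing, starting from `t`. -/
noncomputable def chain (hQ : ∀ n s, IsLE (Q n s)) (hF : IsSubmartingale Q F) {m : ℕ}
    (t : Sit 𝒳 m) : ∀ k, Sit 𝒳 (m + k) :=
  fun k => Nat.rec t
    (fun k ck => snoc ck (Classical.choose (exists_step hQ hF ck))) k

lemma chain_succ (hQ : ∀ n s, IsLE (Q n s)) (hF : IsSubmartingale Q F) {m : ℕ}
    (t : Sit 𝒳 m) (k : ℕ) :
    chain hQ hF t (k + 1)
      = snoc (chain hQ hF t k) (Classical.choose (exists_step hQ hF (chain hQ hF t k))) := rfl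

lemma chain_mono (hQ : ∀ n s, IsLE (Q n s)) (hF : IsSubmartingale Q F) {m : ℕ}
    (t : Sit 𝒳 m) (k : ℕ) : F m t ≤ F (m + k) (chain hQ hF t k) := by
  induction k with
  | zero => exact le_rfl
  | succ k ih =>
    refine le_trans ih ?_
    exact Classical.choose_spec (exists_step hQ hF (chain hQ hF t k))

lemma chain_agree (hQ : ∀ n s, IsLE (Q n s)) (hF : IsSubmartingale Q F) {m : ℕ}
    (t : Sit 𝒳 m) (k k' : ℕ) (h : k ≤ k') :
    ∀ (j : ℕ) (hj : j < m + k) (hj' : j < m + k'),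
      chain hQ hF t k' ⟨j, hj'⟩ = chain hQ hF t k ⟨j, hj⟩ := by
  induction k', h using Nat.le_induction with
  | base => intro j hj hj'; rfl
  | succ k' hk ih =>
    intro j hj hj'
    have hj'' : j < m + k' := lt_of_lt_of_le hj (by omega)
    calc chain hQ hF t (k' + 1) ⟨j, hj'⟩
        = chain hQ hF t k' ⟨j, hj''⟩ := snoc_lt _ _ _ hj''
      _ = chain hQ hF t k ⟨j, hj⟩ := ih j hj hj''

lemma chain_agree' (hQ : ∀ n s, IsLE (Q n s)) (hF : IsSubmartingale Q F) {m : ℕ}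
    (t : Sit 𝒳 m) (k k' : ℕ) (j : ℕ) (hj : j < m + k) (hj' : j < m + k') :
    chain hQ hF t k ⟨j, hj⟩ = chain hQ hF t k' ⟨j, hj'⟩ := by
  rcases le_total k k' with h | h
  · exact (chain_agree hQ hF t k k' h j hj hj').symm
  · exact chain_agree hQ hF t k' k h j hj' hj

/-- The path determined by `chain`. -/
noncomputable def chainPath (hQ : ∀ n s, IsLE (Q n s)) (hF : IsSubmartingale Q F) {m : ℕ}
    (t : Sit 𝒳 m) : Path 𝒳 :=
  fun i => chain hQ hF t (i + 1) ⟨i, by omega⟩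

lemma res_chainPath (hQ : ∀ n s, IsLE (Q n s)) (hF : IsSubmartingale Q F) {m : ℕ}
    (t : Sit 𝒳 m) (k : ℕ) : res (chainPath hQ hF t) (m + k) = chain hQ hF t k := by
  funext i
  show chain hQ hF t ((i : ℕ) + 1) ⟨i, by omega⟩ = chain hQ hF t k i
  calc chain hQ hF t ((i : ℕ) + 1) ⟨i, by omega⟩
      = chain hQ hF t k ⟨(i : ℕ), i.isLt⟩ := chain_agree' hQ hF t _ k _ (by omega) i.isLt
    _ = chain hQ hF t k i := rfl

lemma res_chainPath_zero (hQ : ∀ n s, IsLE (Q n s)) (hF : IsSubmartingale Q F) {m : ℕ}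
    (t : Sit 𝒳 m) : res (chainPath hQ hF t) m = t :=
  res_chainPath hQ hF t 0

lemma le_pathLimsup_chainPath (hQ : ∀ n s, IsLE (Q n s)) (hF : IsSubmartingale Q F) {m : ℕ}
    (t : Sit 𝒳 m) : (F m t : EReal) ≤ pathLimsup F (chainPath hQ hF t) := by
  apply le_limsup_of_frequently_le'
  rw [Filter.frequently_atTop]
  intro N
  refine ⟨m + N, by omega, ?_⟩
  rw [res_chainPath hQ hF t N]
  exact_mod_cast chain_mono hQ hF t N

end Chain

lemma sInf_neg_image (S : Set EReal) : sInf ((fun a => -a) '' S) = -sSup S := by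
  have h1 : sSup S ≤ -sInf ((fun a => -a) '' S) := by
    apply sSup_le
    intro a ha
    have : sInf ((fun a => -a) '' S) ≤ -a := sInf_le ⟨a, ha, rfl⟩
    have h2 := EReal.neg_le_neg_iff.mpr this
    rwa [neg_neg] at h2
  have h2 : -sSup S ≤ sInf ((fun a => -a) '' S) := by
    apply le_sInf
    rintro b ⟨a, ha, rfl⟩
    exact EReal.neg_le_neg_iff.mpr (le_sSup ha)
  have h3 := EReal.neg_le_neg_iff.mpr h1
  rw [neg_neg] at h3
  exact le_antisymm h3 h2

end Aux

/-- The global models of an `(n+1)`-measurable extended real variable conditional on a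
situation of length `n` are given by the local models. -/
theorem global_is_local {𝒳 : ℕ → Type} [∀ n, Fintype (𝒳 n)] [∀ n, Nonempty (𝒳 n)]
    (Q : ∀ n, Sit 𝒳 n → (𝒳 n → ℝ) → ℝ) (hQ : ∀ n s, IsLE (Q n s))
    (n : ℕ) (s : Sit 𝒳 n) (f : Path 𝒳 → EReal)
    (hf : ∀ ω ω' : Path 𝒳, res ω (n + 1) = res ω' (n + 1) → f ω = f ω') :
    (lexp Q s f = sSup ((fun h : 𝒳 n → ℝ => (Q n s h : EReal)) ''
        {h : 𝒳 n → ℝ | ∀ x : 𝒳 n, (h x : EReal) ≤ f (extend (snoc s x))}))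
    ∧ (uexp Q s f = sInf ((fun h : 𝒳 n → ℝ => ((-Q n s fun y => -h y : ℝ) : EReal)) ''
        {h : 𝒳 n → ℝ | ∀ x : 𝒳 n, f (extend (snoc s x)) ≤ (h x : EReal)})) := by
  classical
  have main : ∀ g : Path 𝒳 → EReal,
      (∀ ω ω' : Path 𝒳, res ω (n + 1) = res ω' (n + 1) → g ω = g ω') →
      lexp Q s g = sSup ((fun h : 𝒳 n → ℝ => (Q n s h : EReal)) ''
        {h : 𝒳 n → ℝ | ∀ x : 𝒳 n, (h x : EReal) ≤ g (extend (snoc s x))}) := by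
    intro g hg
    apply le_antisymm
    · -- lexp ≤ local sup
      apply sSup_le
      rintro a ⟨F, ⟨hFsub, hFbdd, hFlim⟩, rfl⟩
      set h : 𝒳 n → ℝ := fun x => F (n + 1) (snoc s x) with hh
      have hmem : ∀ x : 𝒳 n, (h x : EReal) ≤ g (extend (snoc s x)) := by
        intro x
        set ω := chainPath hQ hFsub (snoc s x) with hω
        have hres : res ω (n + 1) = snoc s x := res_chainPath_zero hQ hFsub _
        have hresn : res ω n = s := by
          funext i
          have hco := congrFun hres ⟨(i : ℕ), by omega⟩
          calc res ω n i = ω (i : ℕ) := rfl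
            _ = snoc s x ⟨(i : ℕ), by omega⟩ := hco
            _ = s ⟨(i : ℕ), i.isLt⟩ := snoc_lt s x _ i.isLt
            _ = s i := rfl
        calc (h x : EReal) ≤ pathLimsup F ω := le_pathLimsup_chainPath hQ hFsub _
          _ ≤ g ω := hFlim ω hresn
          _ = g (extend (snoc s x)) := hg _ _ (by rw [hres, res_extend])
      have hQle : F n s ≤ Q n s h := by
        have h1 := (hQ n s).2.1 (fun x => F (n + 1) (snoc s x) - F n s) (fun _ => F n s)
        have h2 := (hQ n s).const_le' (F n s)
        have h3 := hFsub n s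
        have he : (fun x => (F (n + 1) (snoc s x) - F n s) + F n s) = h := by
          funext x; simp [hh]
        rw [he] at h1
        linarith
      calc ((F n s : ℝ) : EReal) ≤ (Q n s h : EReal) := by exact_mod_cast hQle
        _ ≤ _ := by exact le_sSup ⟨h, hmem, rfl⟩
    · -- local sup ≤ lexp
      apply sSup_le
      rintro a ⟨h, hmem, rfl⟩
      set G : ∀ k, Sit 𝒳 k → ℝ := fun k t =>
        if hk : n < k then
          (if trunc t n hk.le = s then h (t ⟨n, hk⟩) else Q n s h)
        else Q n s h with hG
      have hGn : G n s = Q n s h := by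
        simp only [hG]; rw [dif_neg (lt_irrefl n)]
      have hGsub : IsSubmartingale Q G := by
        intro k t
        rcases lt_trichotomy k n with hkn | hkn | hkn
        · have e1 : G k t = Q n s h := by
            simp only [hG]; rw [dif_neg (by omega)]
          have e2 : ∀ x, G (k + 1) (snoc t x) = Q n s h := by
            intro x; simp only [hG]; rw [dif_neg (by omega)]
          have he : (fun x => G (k + 1) (snoc t x) - G k t) = fun _ => (0 : ℝ) := by
            funext x; rw [e1, e2]; ring
          rw [he, (hQ k t).zero']
        · subst hkn
          have e1 : G k t = Q k s h := by
            simp only [hG]; rw [dif_neg (lt_irrefl k)]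
          by_cases hts : t = s
          · subst hts
            have e2 : ∀ x, G (k + 1) (snoc t x) = h x := by
              intro x
              simp only [hG]
              rw [dif_pos (Nat.lt_succ_self k)]
              rw [trunc_snoc t x k (Nat.lt_succ_self k).le le_rfl, trunc_self]
              rw [if_pos rfl, snoc_last]
            have he : (fun x => G (k + 1) (snoc t x) - G k t)
                = fun x => h x + -(Q k t h) := by
              funext x; rw [e1, e2]; ring
            rw [he]
            have h1 := (hQ k t).2.1 h (fun _ => -(Q k t h))
            have h2 := (hQ k t).const_le' (-(Q k t h))
            linarith
          · have e2 : ∀ x, G (k + 1) (snoc t x) = Q k s h := by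
              intro x
              simp only [hG]
              rw [dif_pos (Nat.lt_succ_self k)]
              rw [trunc_snoc t x k (Nat.lt_succ_self k).le le_rfl, trunc_self]
              rw [if_neg hts]
            have he : (fun x => G (k + 1) (snoc t x) - G k t) = fun _ => (0 : ℝ) := by
              funext x; rw [e1, e2]; ring
            rw [he, (hQ k t).zero']
        · have key : ∀ x, G (k + 1) (snoc t x) = G k t := by
            intro x
            simp only [hG]
            rw [dif_pos (by omega : n < k + 1), dif_pos hkn]
            rw [trunc_snoc t x n (by omega) hkn.le]
            by_cases hts : trunc t n hkn.le = s
            · rw [if_pos hts, if_pos hts, snoc_lt t x _ hkn]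
            · rw [if_neg hts, if_neg hts]
          have he : (fun x => G (k + 1) (snoc t x) - G k t) = fun _ => (0 : ℝ) := by
            funext x; rw [key x]; ring
          rw [he, (hQ k t).zero']
      have hGbdd : BddAbv G := by
        obtain ⟨x0, hx0⟩ := Finite.exists_max h
        refine ⟨max (Q n s h) (h x0), ?_⟩
        intro k t
        by_cases hk : n < k
        · simp only [hG]
          rw [dif_pos hk]
          by_cases hts : trunc t n hk.le = s
          · rw [if_pos hts]; exact le_max_of_le_right (hx0 _)
          · rw [if_neg hts]; exact le_max_left _ _
        · simp only [hG]; rw [dif_neg hk]; exact le_max_left _ _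
      have hGlim : ∀ ω : Path 𝒳, res ω n = s → pathLimsup G ω ≤ g ω := by
        intro ω hω
        have hev : ∀ k, n < k → G k (res ω k) = h (ω n) := by
          intro k hk
          simp only [hG]
          rw [dif_pos hk]
          have htr : trunc (res ω k) n hk.le = s := hω
          rw [if_pos htr]
          rfl
        have hlim : pathLimsup G ω = ((h (ω n) : ℝ) : EReal) := by
          unfold pathLimsup
          rw [Filter.limsup_congr (f := atTop)
            (v := fun _ : ℕ => ((h (ω n) : ℝ) : EReal)) ?_]
          · exact limsup_const _
          · filter_upwards [Filter.eventually_ge_atTop (n + 1)] with k hk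
            rw [hev k (by omega)]
        rw [hlim]
        refine le_trans (hmem (ω n)) (le_of_eq ?_)
        refine hg _ ω ?_
        rw [res_extend]
        funext i
        rcases Nat.lt_or_ge (i : ℕ) n with hi | hi
        · calc snoc s (ω n) i = s ⟨(i : ℕ), hi⟩ := snoc_lt _ _ _ hi
            _ = res ω n ⟨(i : ℕ), hi⟩ := by rw [hω]
            _ = ω (i : ℕ) := rfl
            _ = res ω (n + 1) i := rfl
        · have hin : (i : ℕ) = n := by omega
          have hieq : i = ⟨n, by omega⟩ := Fin.ext hin
          rw [hieq]
          calc snoc s (ω n) ⟨n, by omega⟩ = ω n := snoc_last _ _ _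
            _ = res ω (n + 1) ⟨n, by omega⟩ := rfl
      refine le_sSup ⟨G, ⟨hGsub, hGbdd, hGlim⟩, ?_⟩
      show ((G n s : ℝ) : EReal) = ((Q n s h : ℝ) : EReal)
      rw [hGn]
  constructor
  · exact main f hf
  · have hfneg : ∀ ω ω' : Path 𝒳, res ω (n + 1) = res ω' (n + 1) →
        (fun ω => -f ω) ω = (fun ω => -f ω) ω' := by
      intro ω ω' h; simp only [hf ω ω' h]
    show -lexp Q s (fun ω => -f ω) = _
    rw [main _ hfneg, ← sInf_neg_image]
    congr 1
    ext b
    constructor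
    · rintro ⟨a, ⟨h, hmem, rfl⟩, rfl⟩
      refine ⟨fun y => -h y, ?_, ?_⟩
      · intro x
        have hx := hmem x
        rw [EReal.coe_neg]
        exact EReal.le_neg_of_le_neg hx
      · show ((-Q n s (fun y => - - h y) : ℝ) : EReal) = -((Q n s h : ℝ) : EReal)
        simp only [neg_neg]
        rw [EReal.coe_neg]
    · rintro ⟨h, hmem, rfl⟩
      refine ⟨((Q n s (fun y => -h y) : ℝ) : EReal), ⟨fun y => -h y, ?_, rfl⟩, ?_⟩
      · intro x
        rw [EReal.coe_neg]
        exact EReal.neg_le_neg_iff.mpr (hmem x)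
      · show -((Q n s (fun y => -h y) : ℝ) : EReal) = ((-Q n s (fun y => -h y) : ℝ) : EReal)
        rw [EReal.coe_neg]

end IP
end

section
/- Let 𝒳 be a nonempty finite set and let T be a Perron–Frobenius-like lower transition operator on 𝒳 with stationary lower expectation E_∞; assume there exists r ∈ ℕ with ρ(T^r) < 1 and let r be the smallest such natural number, writing ρ := ρ(T^r). Then for all f : 𝒳 → ℝ, all lower expectations E_a and E_b on 𝒳, all ℓ₁, ℓ₂, ℓ ∈ ℕ ∪ {0} and all x, y ∈ 𝒳: (1) |E_a(T^{ℓ₁} f) − E_b(T^{ℓ₂} f)| ≤ ‖f‖_v · ρ^{⌊min(ℓ₁,ℓ₂)/r⌋}; (2) |T^ℓ f(x) − E_∞(f)| ≤ ‖f‖_v · ρ^{⌊ℓ/r⌋}; (3) |E_a(T^ℓ f) − E_∞(f)| ≤ ‖f‖_v · ρ^{⌊ℓ/r⌋}; (4) |T^ℓ f(x) − E_b(T^ℓ f)| ≤ ‖f‖_v · ρ^{⌊ℓ/r⌋}; (5) |T^{ℓ₁} f(x) − T^{ℓ₂} f(y)| ≤ ‖f‖_v · ρ^{⌊min(ℓ₁,ℓ₂)/r⌋}.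 -/
open Filter Topology

namespace IP

/-! Every lower expectation of `g` lies between `min g` and `max g`. Hence the intervals
`[min Tᵏf, max Tᵏf]` shrink as `k` grows, and the one for `k` contains `Tᵏ'f(x)` and `E(Tᵏ'f)`
for all `k' ≥ k`, as well as the limit `E_∞(f)`. All five quantities to be compared lie in such
an interval, whose length `‖Tᵏf‖_v` is at most `ρ(Tʳ)^⌊k/r⌋ ‖f‖_v`: indeed
`‖S h‖_v ≤ ρ(S) ‖h‖_v` for every lower transition operator `S`, by rescaling `h` affinely into
`[0, 1]`, and the interval for `k` lies inside the one for `r ⌊k/r⌋`. -/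

section RangeIcc

variable {Y : Type} [Fintype Y] [Nonempty Y]

def rangeIcc (g : Y → ℝ) : Set ℝ := Set.Icc (⨅ y, g y) (⨆ y, g y)

omit [Nonempty Y] in
lemma apply_mem_rangeIcc (g : Y → ℝ) (y : Y) : g y ∈ rangeIcc g :=
  ⟨ciInf_le (Finite.bddBelow_range g) y, le_ciSup (Finite.bddAbove_range g) y⟩

lemma abs_sub_le_varnorm {g : Y → ℝ} {a b : ℝ} (ha : a ∈ rangeIcc g) (hb : b ∈ rangeIcc g) :
    |a - b| ≤ varnorm g :=
  abs_sub_le_of_le_of_le ha.1 ha.2 hb.1 hb.2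

lemma varnorm_nonneg (g : Y → ℝ) : 0 ≤ varnorm g :=
  sub_nonneg.2 (ciInf_le_ciSup (Finite.bddBelow_range g) (Finite.bddAbove_range g))

lemma varnorm_le_sub {g : Y → ℝ} {a b : ℝ} (h : ∀ y, g y ∈ Set.Icc a b) : varnorm g ≤ b - a :=
  sub_le_sub (ciSup_le fun y => (h y).2) (le_ciInf fun y => (h y).1)

lemma varnorm_mul_add {c : ℝ} (hc : 0 ≤ c) (g : Y → ℝ) (d : ℝ) :
    varnorm (fun y => c * g y + d) = c * varnorm g := by
  unfold varnorm
  rw [← ciSup_add (Finite.bddAbove_range _), ← ciInf_add (Finite.bddBelow_range _),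
    ← Real.mul_iSup_of_nonneg hc, ← Real.mul_iInf_of_nonneg hc]
  ring

end RangeIcc

section LowerExpectation

variable {Y : Type} [Fintype Y] [Nonempty Y] {E : (Y → ℝ) → ℝ}

lemma IsLE.map_zero (hE : IsLE E) : E (fun _ => 0) = 0 := by
  simpa using hE.2.2 (fun _ => 0) 0 le_rfl

lemma IsLE.le_iSup (hE : IsLE E) (f : Y → ℝ) : E f ≤ ⨆ y, f y := by
  have hsum : E f + E (fun y => -f y) ≤ 0 := by
    simpa [hE.map_zero] using hE.2.1 f (fun y => -f y)
  have hneg : -(⨆ y, f y) ≤ E (fun y => -f y) := by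
    refine le_trans ?_ (hE.1 _)
    exact le_ciInf fun y => neg_le_neg (apply_mem_rangeIcc f y).2
  linarith

lemma IsLE.mem_rangeIcc (hE : IsLE E) (f : Y → ℝ) : E f ∈ rangeIcc f :=
  ⟨hE.1 f, hE.le_iSup f⟩

lemma IsLE.map_const (hE : IsLE E) (c : ℝ) : E (fun _ => c) = c := by
  have h := hE.mem_rangeIcc (fun _ => c)
  simp only [rangeIcc, ciInf_const, ciSup_const, Set.Icc_self, Set.mem_singleton_iff] at h
  exact h

lemma IsLE.map_add_const (hE : IsLE E) (f : Y → ℝ) (c : ℝ) :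
    E (fun y => f y + c) = E f + c := by
  have hle : E f + c ≤ E (fun y => f y + c) := by
    simpa [hE.map_const] using hE.2.1 f (fun _ => c)
  have hge : E (fun y => f y + c) - c ≤ E f := by
    simpa [hE.map_const, ← sub_eq_add_neg] using hE.2.1 (fun y => f y + c) (fun _ => -c)
  linarith

lemma IsLE.map_mul_add (hE : IsLE E) (f : Y → ℝ) {c : ℝ} (hc : 0 ≤ c) (d : ℝ) :
    E (fun y => c * f y + d) = c * E f + d := by
  rw [hE.map_add_const (fun y => c * f y), hE.2.2 f c hc]

lemma IsLE.mono (hE : IsLE E) {f g : Y → ℝ} (h : ∀ y, f y ≤ g y) : E f ≤ E g := by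
  have hsum := hE.2.1 f (fun y => g y - f y)
  have hdiff : 0 ≤ E (fun y => g y - f y) :=
    le_trans (le_ciInf fun y => sub_nonneg.2 (h y)) (hE.1 _)
  simp only [add_sub_cancel] at hsum
  linarith

end LowerExpectation

section LowerTransition

variable {X : Type} [Fintype X] [Nonempty X]

def IsLowerTransition (T : (X → ℝ) → X → ℝ) : Prop := ∀ x, IsLE (fun h => T h x)

lemma isLowerTransition_id : IsLowerTransition (id : (X → ℝ) → X → ℝ) := fun x =>
  ⟨fun f => (apply_mem_rangeIcc f x).1, fun _ _ => le_rfl, fun _ _ _ => rfl⟩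

variable {S T : (X → ℝ) → X → ℝ}

lemma IsLowerTransition.comp (hS : IsLowerTransition S) (hT : IsLowerTransition T) :
    IsLowerTransition (S ∘ T) := fun x => by
  refine ⟨fun f => ?_, fun f g => ?_, fun f c hc => ?_⟩
  · exact le_trans (le_ciInf fun y => (hT y).1 f) ((hS x).1 (T f))
  · exact le_trans ((hS x).2.1 _ _) ((hS x).mono fun y => (hT y).2.1 f g)
  · have hTc : (T fun y => c * f y) = fun y => c * T f y := funext fun y => (hT y).2.2 f c hc
    simp only [Function.comp_apply, hTc]
    exact (hS x).2.2 (T f) c hc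

lemma IsLowerTransition.iterate (hT : IsLowerTransition T) : ∀ n, IsLowerTransition T^[n]
  | 0 => isLowerTransition_id
  | n + 1 => by
    rw [Function.iterate_succ]
    exact (hT.iterate n).comp hT

lemma IsLowerTransition.rangeIcc_subset (hS : IsLowerTransition S) (f : X → ℝ) :
    rangeIcc (S f) ⊆ rangeIcc f :=
  Set.Icc_subset_Icc (le_ciInf fun x => ((hS x).mem_rangeIcc f).1)
    (ciSup_le fun x => ((hS x).mem_rangeIcc f).2)

lemma IsLowerTransition.rangeIcc_iterate_subset (hT : IsLowerTransition T) (f : X → ℝ)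
    {m k : ℕ} (hmk : m ≤ k) : rangeIcc (T^[k] f) ⊆ rangeIcc (T^[m] f) := by
  obtain ⟨j, rfl⟩ := Nat.exists_eq_add_of_le hmk
  rw [add_comm, Function.iterate_add_apply]
  exact (hT.iterate j).rangeIcc_subset _

lemma IsLowerTransition.bddAbove_coeff (hS : IsLowerTransition S) :
    BddAbove {v : ℝ | ∃ h : X → ℝ, (∀ x, 0 ≤ h x ∧ h x ≤ 1) ∧ v = varnorm (S h)} := by
  refine ⟨1, ?_⟩
  rintro v ⟨h, hh, rfl⟩
  have hIcc : rangeIcc h ⊆ Set.Icc 0 1 :=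
    Set.Icc_subset_Icc (le_ciInf fun x => (hh x).1) (ciSup_le fun x => (hh x).2)
  simpa using varnorm_le_sub fun x => hIcc ((hS x).mem_rangeIcc h)

lemma IsLowerTransition.coeff_nonneg (hS : IsLowerTransition S) : 0 ≤ coeff S :=
  le_csSup_of_le hS.bddAbove_coeff ⟨0, fun _ => ⟨le_rfl, zero_le_one⟩, rfl⟩ (varnorm_nonneg _)

lemma IsLowerTransition.varnorm_le_coeff_mul (hS : IsLowerTransition S) (h : X → ℝ) :
    varnorm (S h) ≤ coeff S * varnorm h := by
  set m := ⨅ y, h y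
  set c := varnorm h
  have hc : 0 ≤ c := varnorm_nonneg h
  have hspan : ∀ y, h y - m ∈ Set.Icc 0 c := fun y =>
    ⟨sub_nonneg.2 (apply_mem_rangeIcc h y).1, sub_le_sub_right (apply_mem_rangeIcc h y).2 m⟩
  set h' := fun y => (h y - m) / c
  have hunit : ∀ y, 0 ≤ h' y ∧ h' y ≤ 1 := fun y =>
    ⟨div_nonneg (hspan y).1 hc, div_le_one_of_le₀ (hspan y).2 hc⟩
  have hrescale : h = fun y => c * h' y + m := by
    funext y
    rcases hc.eq_or_lt with hc0 | hcpos
    · have := hspan y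
      rw [← hc0, Set.Icc_self, Set.mem_singleton_iff, sub_eq_zero] at this
      simp [← hc0, this]
    · simp only [h', mul_div_cancel₀ _ hcpos.ne', sub_add_cancel]
  calc varnorm (S h) = varnorm (fun x => c * S h' x + m) := by
        conv_lhs => rw [hrescale]
        exact congrArg varnorm (funext fun x => (hS x).map_mul_add h' hc m)
    _ = c * varnorm (S h') := varnorm_mul_add hc _ m
    _ ≤ c * coeff S := mul_le_mul_of_nonneg_left (le_csSup hS.bddAbove_coeff ⟨h', hunit, rfl⟩) hc
    _ = coeff S * c := mul_comm _ _

lemma IsLowerTransition.varnorm_iterate_le (hS : IsLowerTransition S) (h : X → ℝ) :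
    ∀ k, varnorm (S^[k] h) ≤ coeff S ^ k * varnorm h
  | 0 => by simp
  | k + 1 => calc
      varnorm (S^[k + 1] h) = varnorm (S (S^[k] h)) := by rw [Function.iterate_succ_apply']
      _ ≤ coeff S * (coeff S ^ k * varnorm h) :=
        (hS.varnorm_le_coeff_mul _).trans
          (mul_le_mul_of_nonneg_left (hS.varnorm_iterate_le h k) hS.coeff_nonneg)
      _ = coeff S ^ (k + 1) * varnorm h := by ring

lemma IsLowerTransition.abs_sub_le (hT : IsLowerTransition T) (r : ℕ) {f : X → ℝ} {k : ℕ}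
    {a b : ℝ} (ha : a ∈ rangeIcc (T^[k] f)) (hb : b ∈ rangeIcc (T^[k] f)) :
    |a - b| ≤ varnorm f * coeff (T^[r]) ^ (k / r) := by
  have hsub := hT.rangeIcc_iterate_subset f (Nat.mul_div_le k r)
  calc |a - b| ≤ varnorm (T^[r * (k / r)] f) := abs_sub_le_varnorm (hsub ha) (hsub hb)
    _ = varnorm ((T^[r])^[k / r] f) := by rw [Function.iterate_mul]
    _ ≤ coeff (T^[r]) ^ (k / r) * varnorm f := (hT.iterate r).varnorm_iterate_le f _
    _ = varnorm f * coeff (T^[r]) ^ (k / r) := mul_comm _ _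

lemma IsLowerTransition.mem_rangeIcc_of_tendsto (hT : IsLowerTransition T) {f : X → ℝ} {x : X}
    {c : ℝ} (hlim : Tendsto (fun n => T^[n] f x) atTop (𝓝 c)) (m : ℕ) :
    c ∈ rangeIcc (T^[m] f) :=
  isClosed_Icc.mem_of_tendsto hlim <| (eventually_ge_atTop m).mono fun _ hn =>
    hT.rangeIcc_iterate_subset f hn (apply_mem_rangeIcc _ x)

end LowerTransition

theorem basic_bounding_general {X : Type} [Fintype X] [Nonempty X]
    (T : (X → ℝ) → X → ℝ) (hT : ∀ x : X, IsLE (fun h => T h x))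
    (Einf : (X → ℝ) → ℝ)
    (hPF : ∀ (h : X → ℝ) (x : X), Tendsto (fun n => (T^[n] h) x) atTop (nhds (Einf h)))
    (r : ℕ)
    (f : X → ℝ) (Ea Eb : (X → ℝ) → ℝ) (hEa : IsLE Ea) (hEb : IsLE Eb)
    (l1 l2 l : ℕ) (x y : X) :
    (|Ea (T^[l1] f) - Eb (T^[l2] f)| ≤ varnorm f * coeff (T^[r]) ^ (min l1 l2 / r))
    ∧ (|T^[l] f x - Einf f| ≤ varnorm f * coeff (T^[r]) ^ (l / r))
    ∧ (|Ea (T^[l] f) - Einf f| ≤ varnorm f * coeff (T^[r]) ^ (l / r))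
    ∧ (|T^[l] f x - Eb (T^[l] f)| ≤ varnorm f * coeff (T^[r]) ^ (l / r))
    ∧ (|T^[l1] f x - T^[l2] f y| ≤ varnorm f * coeff (T^[r]) ^ (min l1 l2 / r)) := by
  have hLT : IsLowerTransition T := hT
  have hshrink : ∀ {m k}, m ≤ k → rangeIcc (T^[k] f) ⊆ rangeIcc (T^[m] f) :=
    hLT.rangeIcc_iterate_subset f
  have hEinf : Einf f ∈ rangeIcc (T^[l] f) := hLT.mem_rangeIcc_of_tendsto (hPF f x) l
  refine ⟨hLT.abs_sub_le r ?_ ?_, hLT.abs_sub_le r ?_ hEinf, hLT.abs_sub_le r ?_ hEinf,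
    hLT.abs_sub_le r ?_ ?_, hLT.abs_sub_le r ?_ ?_⟩
  · exact hshrink (min_le_left l1 l2) (hEa.mem_rangeIcc _)
  · exact hshrink (min_le_right l1 l2) (hEb.mem_rangeIcc _)
  · exact apply_mem_rangeIcc _ x
  · exact hEa.mem_rangeIcc _
  · exact apply_mem_rangeIcc _ x
  · exact hEb.mem_rangeIcc _
  · exact hshrink (min_le_left l1 l2) (apply_mem_rangeIcc _ x)
  · exact hshrink (min_le_right l1 l2) (apply_mem_rangeIcc _ y)

/-- Basic bounding lemma for Perron–Frobenius-like lower transition operators. -/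
theorem basic_bounding {X : Type} [Fintype X] [Nonempty X]
    (T : (X → ℝ) → X → ℝ) (hT : ∀ x : X, IsLE (fun h => T h x))
    (Einf : (X → ℝ) → ℝ)
    (hPF : ∀ (h : X → ℝ) (x : X), Tendsto (fun n => (T^[n] h) x) atTop (nhds (Einf h)))
    (r : ℕ) (hr0 : 0 < r) (hρ : coeff (T^[r]) < 1)
    (hrmin : ∀ r' : ℕ, 0 < r' → coeff (T^[r']) < 1 → r ≤ r')
    (f : X → ℝ) (Ea Eb : (X → ℝ) → ℝ) (hEa : IsLE Ea) (hEb : IsLE Eb)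
    (l1 l2 l : ℕ) (x y : X) :
    (|Ea (T^[l1] f) - Eb (T^[l2] f)| ≤ varnorm f * coeff (T^[r]) ^ (min l1 l2 / r))
    ∧ (|T^[l] f x - Einf f| ≤ varnorm f * coeff (T^[r]) ^ (l / r))
    ∧ (|Ea (T^[l] f) - Einf f| ≤ varnorm f * coeff (T^[r]) ^ (l / r))
    ∧ (|T^[l] f x - Eb (T^[l] f)| ≤ varnorm f * coeff (T^[r]) ^ (l / r))
    ∧ (|T^[l1] f x - T^[l2] f y| ≤ varnorm f * coeff (T^[r]) ^ (min l1 l2 / r)) :=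
  basic_bounding_general T hT Einf hPF r f Ea Eb hEa hEb l1 l2 l x y

end IP
end
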